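/- Let D = (0 2 7)(1 5 3)(4 9 11)(6 10 8), Y = (0 8 1)(2 3 4)(5 10 9)(6 7 11), T = (0 4 5)(1 6 2)(3 11 10)(7 8 9) be permutations of Fin 12, and let G be the subgroup of the symmetric group on Fin 12 generated by {D, Y, T}. There exists a group isomorphism φ : G ≃ alternatingGroup (Fin 5) with φ(D) = (1 4 5), φ(Y) = (2 4 5), φ(T) = (3 4 5) (the three 3-cycles of {1,2,3,4,5}). -/

import Mathlib

/-- The vertex permutation of the icosahedron face rotation `D`:
`(0 2 7)(1 5 3)(4 9 11)(6 10 8)` on the vertices `Fin 12`. -/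
def icoD : Equiv.Perm (Fin 12) := c[0, 2, 7] * c[1, 5, 3] * c[4, 9, 11] * c[6, 10, 8]

/-- The vertex permutation of the icosahedron face rotation `Y`:
`(0 8 1)(2 3 4)(5 10 9)(6 7 11)` on the vertices `Fin 12`. -/
def icoY : Equiv.Perm (Fin 12) := c[0, 8, 1] * c[2, 3, 4] * c[5, 10, 9] * c[6, 7, 11]

/-- The vertex permutation of the icosahedron face rotation `T`:
`(0 4 5)(1 6 2)(3 11 10)(7 8 9)` on the vertices `Fin 12`. -/
def icoT : Equiv.Perm (Fin 12) := c[0, 4, 5] * c[1, 6, 2] * c[3, 11, 10] * c[7, 8, 9]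

/-- The rotation group of the icosahedron, realized as the subgroup of the symmetric
group on the twelve vertices generated by the face rotations `D`, `Y`, `T`. -/
def icoG : Subgroup (Equiv.Perm (Fin 12)) := Subgroup.closure {icoD, icoY, icoT}

theorem icoD_mem : icoD ∈ icoG := Subgroup.subset_closure (Set.mem_insert _ _)

theorem icoY_mem : icoY ∈ icoG :=
  Subgroup.subset_closure (Set.mem_insert_of_mem _ (Set.mem_insert _ _))

theorem icoT_mem : icoT ∈ icoG :=
  Subgroup.subset_closure (Set.mem_insert_of_mem _ (Set.mem_insert_of_mem _ rfl))

/- The thirty edges of the icosahedron split into five perfect matchings (each made of three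
pairs of opposite edges in mutually orthogonal planes), and `D`, `Y`, `T` permute these matchings
by conjugation as the three 3-cycles permute `Fin 5`. So `G` is the first projection of the
subgroup `H ≤ S₁₂ × S₅` generated by the three pairs, which is the graph of the isomorphism once
both projections are shown injective. The first is injective because the matchings are distinct.
For the second, a rotation fixing every matching fixes the cyclic order in which the matchings
meet a vertex; that order determines the vertex, so the rotation has a fixed point, and commuting
with the matchings, which generate a transitive group, it is the identity. Finally `|G| ≥ 60 = |A₅|`
since `G` is transitive on the twelve vertices and `DYT` has order five. -/

open Equiv Function Subgroup

section ConjPerm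

variable {M ι : Type*} [Group M]

def conjPerm (m : ι → M) : Subgroup (M × Perm ι) where
  carrier := {p | ∀ i, p.1 * m i * p.1⁻¹ = m (p.2 i)}
  one_mem' i := by simp
  mul_mem' {p q} hp hq i :=
    calc p.1 * q.1 * m i * (p.1 * q.1)⁻¹ = p.1 * (q.1 * m i * q.1⁻¹) * p.1⁻¹ := by group
      _ = m ((p.2 * q.2) i) := by rw [hq, hp]; rfl
  inv_mem' {p} hp i :=
    calc p.1⁻¹ * m i * p.1⁻¹⁻¹ = p.1⁻¹ * (p.1 * m (p.2⁻¹ i) * p.1⁻¹) * p.1 := by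
          rw [hp]; simp only [Perm.coe_inv, apply_symm_apply]; group
      _ = m (p⁻¹.2 i) := by group; rfl

variable {m : ι → M} {p : M × Perm ι}

theorem mem_conjPerm : p ∈ conjPerm m ↔ ∀ i, p.1 * m i * p.1⁻¹ = m (p.2 i) := Iff.rfl

theorem conjPerm.snd_eq_one (hm : Injective m) (hp : p ∈ conjPerm m) (h1 : p.1 = 1) :
    p.2 = 1 :=
  Perm.ext fun i => hm <| by simpa [h1] using (hp i).symm

theorem conjPerm.apply_apply {α : Type*} {m : ι → Perm α} {p : Perm α × Perm ι}
    (hp : p ∈ conjPerm m) (i : ι) (v : α) : p.1 (m i v) = m (p.2 i) (p.1 v) := by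
  rw [← hp i]; simp

end ConjPerm

theorem MonoidHom.bijective_subgroupMap {G G' : Type*} [Group G] [Group G'] (f : G →* G')
    (H : Subgroup G) (hf : ∀ x ∈ H, f x = 1 → x = 1) : Bijective (f.subgroupMap H) :=
  ⟨(injective_iff_map_eq_one _).2 fun x hx => Subtype.ext (hf x x.2 (congrArg Subtype.val hx)),
    f.subgroupMap_surjective H⟩

theorem Subgroup.exists_mulEquiv_map_fst_map_snd {M N : Type*} [Group M] [Group N]
    (H : Subgroup (M × N)) (hfst : ∀ p ∈ H, p.1 = 1 → p = 1) (hsnd : ∀ p ∈ H, p.2 = 1 → p = 1) :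
    ∃ e : H.map (MonoidHom.fst M N) ≃* H.map (MonoidHom.snd M N),
      ∀ p (hp : p ∈ H), (e ⟨p.1, p, hp, rfl⟩ : N) = p.2 := by
  let e₁ := MulEquiv.ofBijective _ ((MonoidHom.fst M N).bijective_subgroupMap H hfst)
  let e₂ := MulEquiv.ofBijective _ ((MonoidHom.snd M N).bijective_subgroupMap H hsnd)
  refine ⟨e₁.symm.trans e₂, fun p hp => ?_⟩
  have : e₁.symm ⟨p.1, p, hp, rfl⟩ = ⟨p, hp⟩ := e₁.symm_apply_eq.2 rfl
  simp [this, e₂]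

section Reach

variable {α : Type*} [DecidableEq α]

def reachStep (s : List (Perm α)) (A : Finset α) : Finset α :=
  A ∪ A.biUnion fun x => (s.map (· x)).toFinset

theorem mem_orbit_of_mem_iterate_reachStep {K : Subgroup (Perm α)} {s : List (Perm α)}
    (hs : ∀ g ∈ s, g ∈ K) {a x : α} {n : ℕ} (hx : x ∈ (reachStep s)^[n] {a}) :
    x ∈ MulAction.orbit K a := by
  induction n generalizing x with
  | zero =>
    rw [iterate_zero_apply, Finset.mem_singleton] at hx
    rw [hx]
    exact MulAction.mem_orbit_self a
  | succ n ih =>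
    rw [iterate_succ_apply', reachStep, Finset.mem_union, Finset.mem_biUnion] at hx
    rcases hx with hx | ⟨y, hy, hxy⟩
    · exact ih hx
    · obtain ⟨g, hg, rfl⟩ := List.mem_map.1 (List.mem_toFinset.1 hxy)
      exact MulAction.mem_orbit_of_mem_orbit (⟨g, hs g hg⟩ : K) (ih hy)

end Reach

/-- `icoLink v` cycles the five neighbours of `v` in their rotational order around `v`, so that a
rotation `g` conjugates `icoLink v` to `icoLink (g v)`. -/
def icoLink : Fin 12 → Perm (Fin 12) :=
  ![c[1, 8, 3, 7, 2], c[0, 2, 6, 4, 8], c[0, 7, 5, 6, 1], c[0, 8, 11, 10, 7],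
    c[1, 6, 9, 11, 8], c[2, 7, 10, 9, 6], c[1, 2, 5, 9, 4], c[0, 3, 10, 5, 2],
    c[0, 1, 4, 11, 3], c[4, 6, 5, 10, 11], c[3, 11, 9, 5, 7], c[3, 8, 4, 9, 10]]

/-- The five perfect matchings of the icosahedron by three pairs of opposite edges in mutually
orthogonal planes, as fixed-point-free involutions; matching `k` is the point `k` of `Fin 5`. -/
def icoMatching : Fin 5 → Perm (Fin 12) :=
  ![c[0, 7] * c[1, 8] * c[2, 6] * c[3, 11] * c[4, 9] * c[5, 10],
    c[0, 2] * c[1, 4] * c[3, 8] * c[5, 6] * c[7, 10] * c[9, 11],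
    c[0, 1] * c[2, 5] * c[3, 7] * c[4, 6] * c[8, 11] * c[9, 10],
    c[0, 3] * c[1, 2] * c[4, 8] * c[5, 7] * c[6, 9] * c[10, 11],
    c[0, 8] * c[1, 6] * c[2, 7] * c[3, 10] * c[4, 11] * c[5, 9]]

def icoGraph : Subgroup (Perm (Fin 12) × Perm (Fin 5)) :=
  closure {(icoD, c[1, 4, 5]), (icoY, c[2, 4, 5]), (icoT, c[3, 4, 5])}

theorem icoMatching_injective : Injective icoMatching := by decide

set_option maxRecDepth 4000 in
theorem icoG_le_conjPerm_icoLink : ∀ g ∈ icoG, (g, g) ∈ conjPerm icoLink := by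
  change icoG ≤ (conjPerm icoLink).comap ((MonoidHom.id _).prod (MonoidHom.id _))
  rw [icoG, closure_le]
  rintro _ (rfl | rfl | rfl) <;> exact mem_conjPerm.2 (by decide)

set_option maxRecDepth 4000 in
theorem icoGraph_le_conjPerm_icoMatching : icoGraph ≤ conjPerm icoMatching := by
  rw [icoGraph, closure_le]
  rintro _ (rfl | rfl | rfl) <;> exact mem_conjPerm.2 (by decide)

theorem map_fst_icoGraph : icoGraph.map (MonoidHom.fst _ _) = icoG := by
  simp [icoGraph, icoG, MonoidHom.map_closure, Set.image_insert_eq]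

theorem map_snd_icoGraph_le : icoGraph.map (MonoidHom.snd _ _) ≤ alternatingGroup (Fin 5) := by
  rw [icoGraph, MonoidHom.map_closure, closure_le]
  simp only [Set.image_insert_eq, Set.image_singleton, MonoidHom.coe_snd]
  rintro _ (rfl | rfl | rfl) <;> rw [SetLike.mem_coe, Perm.mem_alternatingGroup] <;> decide

/- Orientation is essential here: the antipode `9` of `0` sees the matchings in the reverse cyclic
order, and the antipodal map commutes with every matching. -/
theorem eq_zero_of_icoLink_icoMatching (v : Fin 12)
    (hv : ∀ i j, icoMatching j 0 = icoLink 0 (icoMatching i 0) →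
      icoMatching j v = icoLink v (icoMatching i v)) : v = 0 := by
  decide +revert

set_option maxRecDepth 4000 in
theorem mem_orbit_closure_icoMatching (x : Fin 12) :
    x ∈ MulAction.orbit (closure (Set.range icoMatching)) 0 :=
  mem_orbit_of_mem_iterate_reachStep (s := List.ofFn icoMatching) (n := 3)
    (fun _ hg => subset_closure ((List.mem_ofFn ..).1 hg)) (by decide +revert)

theorem eq_one_of_mem_icoGraph {p : Perm (Fin 12) × Perm (Fin 5)} (hp : p ∈ icoGraph)
    (h : p.2 = 1) : p.1 = 1 := by
  have hlink := icoG_le_conjPerm_icoLink p.1 (map_fst_icoGraph ▸ mem_map_of_mem _ hp)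
  have hcomm (i : Fin 5) (v : Fin 12) : p.1 (icoMatching i v) = icoMatching i (p.1 v) := by
    simpa [h] using conjPerm.apply_apply (icoGraph_le_conjPerm_icoMatching hp) i v
  have hfix : p.1 0 = 0 := eq_zero_of_icoLink_icoMatching _ fun i j hij => by
    rw [← hcomm, hij, conjPerm.apply_apply hlink, hcomm]
  have hcentral : closure (Set.range icoMatching) ≤ centralizer {p.1} := by
    rw [closure_le]
    rintro _ ⟨i, rfl⟩
    exact mem_centralizer_singleton_iff.2 (Perm.ext fun v => (hcomm i v).symm)
  refine Perm.ext fun x => ?_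
  obtain ⟨g, rfl⟩ := mem_orbit_closure_icoMatching x
  change p.1 (g.1 0) = g.1 0
  rw [← Perm.mul_apply, ← mem_centralizer_singleton_iff.1 (hcentral g.2), Perm.mul_apply, hfix]

set_option maxRecDepth 4000 in
theorem sixty_le_card_icoG : 60 ≤ Nat.card icoG := by
  have h12 : 12 ∣ Nat.card icoG := by
    have htrans (x : Fin 12) : x ∈ MulAction.orbit icoG 0 :=
      mem_orbit_of_mem_iterate_reachStep (s := [icoD, icoY, icoT]) (n := 3)
        (by simp [icoD_mem, icoY_mem, icoT_mem]) (by decide +revert)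
    have horbit : MulAction.orbit icoG (0 : Fin 12) = Set.univ := Set.eq_univ_of_forall htrans
    have := (MulAction.stabilizer icoG (0 : Fin 12)).index_dvd_card
    rwa [MulAction.index_stabilizer, horbit, Set.ncard_univ, Nat.card_fin] at this
  have h5 : 5 ∣ Nat.card icoG := by
    have : Fact (Nat.Prime 5) := ⟨by norm_num⟩
    have hmem : icoD * icoY * icoT ∈ icoG := mul_mem (mul_mem icoD_mem icoY_mem) icoT_mem
    have hord : orderOf (⟨_, hmem⟩ : icoG) = 5 := by
      rw [Subgroup.orderOf_mk]
      exact orderOf_eq_prime (by decide) (by decide)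
    exact hord ▸ orderOf_dvd_natCard _
  exact Nat.le_of_dvd Nat.card_pos (Nat.Coprime.mul_dvd_of_dvd_of_dvd (by norm_num) h12 h5)

/-- There is a group isomorphism `φ` from the icosahedron rotation group `G`
(generated by the face rotations `D`, `Y`, `T` acting on the twelve vertices
`Fin 12`) to the alternating group `A₅` on `{1,2,3,4,5}` (identified with `Fin 5`)
sending `D ↦ (1 4 5)`, `Y ↦ (2 4 5)`, `T ↦ (3 4 5)`. -/
theorem icosahedron_rotation_group_iso_alternatingGroup :
    ∃ φ : icoG ≃* alternatingGroup (Fin 5),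
      ((φ ⟨icoD, icoD_mem⟩ : alternatingGroup (Fin 5)) : Equiv.Perm (Fin 5)) = c[1, 4, 5] ∧
      ((φ ⟨icoY, icoY_mem⟩ : alternatingGroup (Fin 5)) : Equiv.Perm (Fin 5)) = c[2, 4, 5] ∧
      ((φ ⟨icoT, icoT_mem⟩ : alternatingGroup (Fin 5)) : Equiv.Perm (Fin 5)) = c[3, 4, 5] := by
  obtain ⟨e, he⟩ := icoGraph.exists_mulEquiv_map_fst_map_snd
    (fun p hp h1 => Prod.ext h1
      (conjPerm.snd_eq_one icoMatching_injective (icoGraph_le_conjPerm_icoMatching hp) h1))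
    (fun p hp h2 => Prod.ext (eq_one_of_mem_icoGraph hp h2) h2)
  have hA : icoGraph.map (MonoidHom.snd _ _) = alternatingGroup (Fin 5) := by
    refine Subgroup.eq_of_le_of_card_ge map_snd_icoGraph_le ?_
    rw [← Nat.card_congr e.toEquiv, map_fst_icoGraph, nat_card_alternatingGroup, Nat.card_fin]
    exact sixty_le_card_icoG
  refine ⟨(MulEquiv.subgroupCongr map_fst_icoGraph.symm).trans
    (e.trans (MulEquiv.subgroupCongr hA)), ?_, ?_, ?_⟩ <;>
    simp only [MulEquiv.trans_apply, MulEquiv.subgroupCongr_apply]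
  · exact he (icoD, c[1, 4, 5]) (subset_closure (by simp))
  · exact he (icoY, c[2, 4, 5]) (subset_closure (by simp))
  · exact he (icoT, c[3, 4, 5]) (subset_closure (by simp))
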